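/- arXiv:1701.08799 — 2 statements merged into one kernel-verified Lean document; each statement's English description precedes it below -/
import Mathlib

section
/- For the greedy algorithm on an ε-approximately submodular monotone function σ with threshold T: if A_i is the greedy set after i iterations and C is any set of size o with σ(C) ≥ T, then T − σ(A_i) ≤ o · (σ(A_{i+1}) − σ(A_i) + ε), where A_{i+1} is obtained by adding an element maximizing marginal gain. -/
/-- Greedy step inequality: if `σ` is ε-approximately submodular and monotone,
`C` has `σ C ≥ T` and `|C| = o`, and `x*` maximizes the marginal gain over the
current greedy set `A`, then `T - σ A ≤ o * (σ (insert x* A) - σ A + ε)`. -/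
theorem stmt_5 {V : Type*} [DecidableEq V] (σ : Finset V → ℝ) (ε : ℝ)
    (happrox : ∀ A B : Finset V, ∀ x : V, A ⊆ B →
      σ (insert x B) - σ B ≤ σ (insert x A) - σ A + ε)
    (hmono : ∀ A C : Finset V, σ A ≤ σ (A ∪ C))
    (T : ℝ) (A C : Finset V) (hC : T ≤ σ C)
    (xstar : V)
    (hgreedy : ∀ x : V, σ (insert x A) ≤ σ (insert xstar A)) :
    T - σ A ≤ (C.card : ℝ) * (σ (insert xstar A) - σ A + ε) := by
  have key : ∀ s : Finset V, σ (A ∪ s) - σ A ≤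
      (s.card : ℝ) * (σ (insert xstar A) - σ A + ε) := by
    intro s
    induction s using Finset.induction_on with
    | empty => simp
    | @insert a s ha ih =>
      have h1 : σ (insert a (A ∪ s)) - σ (A ∪ s) ≤ σ (insert a A) - σ A + ε :=
        happrox A (A ∪ s) a Finset.subset_union_left
      have h2 : σ (insert a A) ≤ σ (insert xstar A) := hgreedy a
      have hcard : ((insert a s).card : ℝ) = (s.card : ℝ) + 1 := by
        rw [Finset.card_insert_of_notMem ha]; push_cast; ring
      have hunion : A ∪ insert a s = insert a (A ∪ s) := by
        ext x; simp [or_left_comm, or_comm]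
      rw [hunion, hcard]
      nlinarith [ih, h1, h2]
  have h3 : T ≤ σ (A ∪ C) := le_trans hC (by
    have := hmono C A
    rwa [Finset.union_comm] at this)
  linarith [key C]
end

section
/- Geometric decay threshold bound: if o ≥ 1 and T(1 − 1/o)^i + εo ≥ o(1 + ε) for some nonnegative integer i, then i ≤ o · log(T / o). -/
/-- Geometric decay threshold bound: if `o ≥ 1`, `T ≥ o` and
`T (1 - 1/o)^i + ε o ≥ o (1 + ε)`, then `i ≤ o * log (T / o)`. -/
theorem stmt_7 (T o ε : ℝ) (i : ℕ) (hT : 0 < T) (ho : 1 ≤ o) (hε : 0 < ε)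
    (hTo : o ≤ T)
    (h : o * (1 + ε) ≤ T * (1 - 1 / o) ^ i + ε * o) :
    (i : ℝ) ≤ o * Real.log (T / o) := by
  have ho0 : (0:ℝ) < o := lt_of_lt_of_le one_pos ho
  have hbase : (0:ℝ) ≤ 1 - 1/o := by
    have : 1/o ≤ 1 := by rw [div_le_one ho0]; exact ho
    linarith
  have h1 : o ≤ T * (1 - 1/o)^i := by nlinarith
  have h2 : (1 - 1/o)^i ≤ Real.exp (-((i:ℝ)/o)) := by
    calc (1 - 1/o)^i ≤ (Real.exp (-(1/o)))^i :=
          pow_le_pow_left₀ hbase (by have := Real.add_one_le_exp (-(1/o)); linarith) i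
    _ = Real.exp (-((i:ℝ)/o)) := by
          rw [← Real.exp_nat_mul]; ring_nf
  have h3 : o ≤ T * Real.exp (-((i:ℝ)/o)) :=
    le_trans h1 (mul_le_mul_of_nonneg_left h2 hT.le)
  have h4 : Real.log o ≤ Real.log T + (-((i:ℝ)/o)) := by
    have := Real.log_le_log ho0 h3
    rwa [Real.log_mul hT.ne' (Real.exp_pos _).ne', Real.log_exp] at this
  have h5 : (i:ℝ)/o ≤ Real.log (T/o) := by
    rw [Real.log_div hT.ne' ho0.ne']; linarith
  rw [div_le_iff₀ ho0] at h5
  linarith [h5]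
end
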